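/- Let S be a finite multiset of pairs (α, n) with α ∈ ℂˣ and n ∈ ℕ, and let r ∈ ℂˣ with q := r². Define L(S)(X) = ∏_{(α,n) ∈ S} 1/(1 − α r^{-n} X) ∈ ℂ(X). Let T be the multiset obtained from S by replacing each pair (α, n) with n ≥ 1 by the two pairs (α, n+1) and (α, n−1), and each pair (α, 0) by the single pair (α, 1). Then L(S)(X) · L(S)(q^{-1}X) / L(T)(r^{-1}X) = ∏_{(α,0) ∈ S} 1/(1 − α X). -/
import Mathlib


open scoped BigOperators

/-- The L-factor `∏_{(α,n) ∈ S} 1/(1 − α r^{-n} c X)` attached to a multiset `S` of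
pairs `(α, n)` (with `α ∈ ℂˣ`), a square root `r` of `q`, and a scaling factor `c`
(so `c = 1` gives `L(S)(X)`, `c = q⁻¹` gives `L(S)(q⁻¹X)`, `c = r⁻¹` gives `L(S)(r⁻¹X)`). -/
noncomputable def Lfactor (r : ℂˣ) (S : Multiset (ℂˣ × ℕ)) (c : ℂ) : RatFunc ℂ :=
  (S.map fun p => (1 - RatFunc.C ((p.1 : ℂ) * (r : ℂ) ^ (-(p.2 : ℤ)) * c) * RatFunc.X)⁻¹).prod

lemma one_sub_ne (a : ℂ) : (1 - RatFunc.C a * RatFunc.X : RatFunc ℂ) ≠ 0 := by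
  have h : (1 - RatFunc.C a * RatFunc.X : RatFunc ℂ)
      = algebraMap (Polynomial ℂ) _ (1 - Polynomial.C a * Polynomial.X) := by
    simp [map_sub, map_mul, RatFunc.algebraMap_C, RatFunc.algebraMap_X]
  rw [h]
  intro h0
  have h1 : (1 - Polynomial.C a * Polynomial.X : Polynomial ℂ) = 0 :=
    RatFunc.algebraMap_injective ℂ (by simpa using h0)
  have := congrArg (fun p => Polynomial.coeff p 0) h1
  simp at this

lemma Lfactor_cons (r : ℂˣ) (p : ℂˣ × ℕ) (S : Multiset (ℂˣ × ℕ)) (c : ℂ) :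
    Lfactor r (p ::ₘ S) c
      = (1 - RatFunc.C ((p.1 : ℂ) * (r : ℂ) ^ (-(p.2 : ℤ)) * c) * RatFunc.X)⁻¹ *
        Lfactor r S c := by
  simp [Lfactor]

lemma Lfactor_add (r : ℂˣ) (A B : Multiset (ℂˣ × ℕ)) (c : ℂ) :
    Lfactor r (A + B) c = Lfactor r A c * Lfactor r B c := by
  simp [Lfactor, Multiset.prod_add]

lemma zpow_neg_nat (r : ℂˣ) (n : ℕ) : (r : ℂ) ^ (-(n : ℤ)) = ((r : ℂ) ^ n)⁻¹ := by
  rw [zpow_neg, zpow_natCast]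


/-- With `T` obtained from `S` by replacing `(α, n)`, `n ≥ 1`, by `(α, n+1)` and `(α, n−1)`,
and `(α, 0)` by `(α, 1)`, one has
`L(S)(X)·L(S)(q⁻¹X)/L(T)(r⁻¹X) = ∏_{(α,0) ∈ S} 1/(1 − αX)`. -/
theorem stmt_6 (r : ℂˣ) (q : ℂ) (hq : q = (r : ℂ) ^ 2) (S : Multiset (ℂˣ × ℕ)) :
    Lfactor r S 1 * Lfactor r S q⁻¹ /
        Lfactor r (S.bind fun p => if p.2 = 0 then {(p.1, 1)}
          else {(p.1, p.2 + 1), (p.1, p.2 - 1)}) (r : ℂ)⁻¹ =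
      ((S.filter fun p => p.2 = 0).map
        fun p => (1 - RatFunc.C (p.1 : ℂ) * RatFunc.X)⁻¹).prod := by
  induction S using Multiset.induction with
  | empty => simp [Lfactor]
  | cons p S ih =>
    obtain ⟨α, n⟩ := p
    rw [Multiset.cons_bind, Lfactor_add, Lfactor_cons, Lfactor_cons,
      mul_mul_mul_comm, mul_div_mul_comm, ih]
    have hr : (r : ℂ) ≠ 0 := r.ne_zero
    have hq0 : q ≠ 0 := by rw [hq]; exact pow_ne_zero 2 hr
    rcases Nat.eq_zero_or_pos n with h0 | h1
    · subst h0
      rw [Multiset.filter_cons_of_pos _ (by simp)]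
      simp only [eq_self_iff_true, if_true]
      have e0 : (α : ℂ) * (r : ℂ) ^ (-((0:ℕ) : ℤ)) * 1 = (α : ℂ) := by simp
      have e0' : (α : ℂ) * (r : ℂ) ^ (-((0:ℕ) : ℤ)) * q⁻¹ = (α : ℂ) * q⁻¹ := by simp
      have e1 : (α : ℂ) * (r : ℂ) ^ (-((1:ℕ) : ℤ)) * (r : ℂ)⁻¹ = (α : ℂ) * q⁻¹ := by
        rw [zpow_neg_nat, hq]; field_simp
      have hT : Lfactor r {(α, 1)} ((r : ℂ))⁻¹
          = (1 - RatFunc.C ((α : ℂ) * q⁻¹) * RatFunc.X)⁻¹ := by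
        simp only [Lfactor, Multiset.map_singleton, Multiset.prod_singleton, e1]
      rw [hT]
      simp only [Multiset.map_cons, Multiset.prod_cons, e0, e0']
      rw [mul_div_assoc, div_self (inv_ne_zero (one_sub_ne _)), mul_one, mul_comm]
    · obtain ⟨m, hm⟩ : ∃ m, n = m + 1 := ⟨n - 1, by omega⟩
      subst hm
      rw [Multiset.filter_cons_of_neg _ (by simp)]
      rw [if_neg (Nat.succ_ne_zero m), Nat.add_sub_cancel]
      have e1 : (α : ℂ) * (r : ℂ) ^ (-((m + 1 + 1 : ℕ) : ℤ)) * (r : ℂ)⁻¹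
          = (α : ℂ) * (r : ℂ) ^ (-((m + 1 : ℕ) : ℤ)) * q⁻¹ := by
        rw [zpow_neg_nat, zpow_neg_nat, hq]; field_simp; ring
      have e2 : (α : ℂ) * (r : ℂ) ^ (-((m : ℕ) : ℤ)) * (r : ℂ)⁻¹
          = (α : ℂ) * (r : ℂ) ^ (-((m + 1 : ℕ) : ℤ)) * 1 := by
        rw [zpow_neg_nat, zpow_neg_nat]; field_simp; ring
      have hT : Lfactor r {(α, m + 1 + 1), (α, m)} ((r : ℂ))⁻¹
          = (1 - RatFunc.C ((α : ℂ) * (r : ℂ) ^ (-((m + 1 : ℕ) : ℤ)) * q⁻¹) * RatFunc.X)⁻¹ *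
            (1 - RatFunc.C ((α : ℂ) * (r : ℂ) ^ (-((m + 1 : ℕ) : ℤ)) * 1) * RatFunc.X)⁻¹ := by
        show Lfactor r ((α, m + 1 + 1) ::ₘ {(α, m)}) _ = _
        rw [Lfactor_cons]
        simp only [Lfactor, Multiset.map_singleton, Multiset.prod_singleton]
        rw [e1, e2]
      rw [hT, mul_comm ((1 - RatFunc.C ((α : ℂ) * (r : ℂ) ^ (-((m + 1 : ℕ) : ℤ)) * q⁻¹) * RatFunc.X)⁻¹)]
      rw [div_self (mul_ne_zero (inv_ne_zero (one_sub_ne _)) (inv_ne_zero (one_sub_ne _))), one_mul]
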